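/- arXiv:2106.15470 — 7 statements merged into one kernel-verified Lean document; each statement's English description precedes it below -/
import Mathlib

section
/- Let G be a k-partite tournament with vertex classes V_1,…,V_k where |V_k| = s ≥ k−1. Then there exists a minimal feedback arc set of G in which the maximum number of pairwise vertex-disjoint transitive k-cliques is at most s − k + 1. In particular f_k(G) ≤ s − k + 1, where f_k(G) is the maximum number of pairwise disjoint transitive k-cliques found in every minimal feedback arc set of G. -/
/-- A directed graph (relation) is acyclic if it has no directed cycle,
equivalently its transitive closure is irreflexive. -/
def IsAcyclicRel {V : Type*} (r : V → V → Prop) : Prop :=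
  ∀ v, ¬ Relation.TransGen r v v

/-- `F` is a feedback arc set of the directed graph with edge set `E`:
`F ⊆ E` and every directed cycle of `E` contains an edge of `F`,
equivalently the complement of `F` in `E` is acyclic. -/
def IsFAS {V : Type*} (E F : V → V → Prop) : Prop :=
  (∀ u v, F u v → E u v) ∧ IsAcyclicRel (fun u v => E u v ∧ ¬ F u v)

/-- A feedback arc set is minimal if no proper subset of it is a feedback arc set. -/
def IsMinFAS {V : Type*} (E F : V → V → Prop) : Prop :=
  IsFAS E F ∧ ∀ F' : V → V → Prop, (∀ u v, F' u v → F u v) → F' ≠ F → ¬ IsFAS E F'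


/-- `S` induces a transitive `k`-clique in the directed graph `F`: it has `k` vertices,
any two distinct vertices of `S` are joined by an edge of `F`, and `F` restricted to `S`
is acyclic. -/
def IsTransClique {V : Type*} (F : V → V → Prop) (k : ℕ) (S : Finset V) : Prop :=
  S.card = k ∧ (∀ u ∈ S, ∀ v ∈ S, u ≠ v → F u v ∨ F v u) ∧
    IsAcyclicRel (fun a b => a ∈ S ∧ b ∈ S ∧ F a b)


/-
Pick, for every class `Vᵢ` other than the large class `V_{i₀}`, its own centre `xᵢ ∈ V_{i₀}`.
Ranking each centre between its in-neighbours and its out-neighbours in `Vᵢ` orients all arcs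
between `xᵢ` and `Vᵢ` upwards, so some minimal feedback arc set, chosen among the backward arcs
of this ranking, contains no arc between `xᵢ` and `Vᵢ`. A transitive `k`-clique of it is a
transversal of the classes, so its vertex in `V_{i₀}` is not a centre: disjoint cliques use
distinct vertices among the `s - (k - 1)` non-centres of `V_{i₀}`.
-/

open Finset Function

section FeedbackArcSet

variable {V : Type*} {E : V → V → Prop}

theorem IsAcyclicRel.of_lt_comp {α : Type*} [Preorder α] {r : V → V → Prop} (f : V → α)
    (hf : ∀ u v, r u v → f u < f v) : IsAcyclicRel r := fun v hv => by
  have := hv.lift f hf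
  rw [Relation.transGen_eq_self] at this
  exact lt_irrefl _ this

theorem IsFAS.exists_isMinFAS_le [Finite V] {F₀ : V → V → Prop} (hF₀ : IsFAS E F₀) :
    ∃ F ≤ F₀, IsMinFAS E F := by
  obtain ⟨F, hle, hF, hmin⟩ := exists_minimal_le_of_wellFoundedLT (IsFAS E) F₀ hF₀
  exact ⟨F, hle, hF, fun F' hF'F hne hF' => hne (le_antisymm hF'F (hmin hF' hF'F))⟩

theorem exists_isMinFAS_of_rank [Finite V] {α : Type*} [Preorder α] (E : V → V → Prop)
    (f : V → α) : ∃ F, IsMinFAS E F ∧ ∀ u v, F u v → ¬ f u < f v := by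
  have hback : IsFAS E fun u v => E u v ∧ ¬ f u < f v :=
    ⟨fun _ _ h => h.1, IsAcyclicRel.of_lt_comp f fun _ _ h => not_not.1 fun h' => h.2 ⟨h.1, h'⟩⟩
  obtain ⟨F, hle, hF⟩ := hback.exists_isMinFAS_le
  exact ⟨F, hF, fun u v h => (hle u v h).2⟩

theorem exists_isMinFAS_avoiding_stars [Finite V] {ι : Type*} (x : ι → V) (L : ι → Finset V)
    (hL : Pairwise (Disjoint on L)) (hx : ∀ i j, x j ∉ L i)
    (hanti : ∀ i, ∀ w ∈ L i, E (x i) w → ¬ E w (x i)) :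
    ∃ F, IsMinFAS E F ∧ ∀ i, ∀ w ∈ L i, ¬ F (x i) w ∧ ¬ F w (x i) := by
  classical
  let rank : V → ℕ := fun w =>
    if w ∈ Set.range x then 1 else if ∃ i, w ∈ L i ∧ E w (x i) then 0 else 2
  obtain ⟨F, hF, hdown⟩ := exists_isMinFAS_of_rank E rank
  have rank_center (i : ι) : rank (x i) = 1 := if_pos ⟨i, rfl⟩
  refine ⟨F, hF, fun i w hw => ?_⟩
  have hnc : w ∉ Set.range x := fun ⟨j, hj⟩ => hx i j (hj ▸ hw)
  refine ⟨fun hxw => ?_, fun hwx => ?_⟩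
  · have hnot : ¬ ∃ j, w ∈ L j ∧ E w (x j) := by
      rintro ⟨j, hwj, hE⟩
      obtain rfl : j = i := hL.eq (not_disjoint_iff.2 ⟨w, hwj, hw⟩)
      exact hanti j w hw (hF.1.1 _ _ hxw) hE
    have hrank : rank w = 2 := by
      simp only [rank, if_neg hnc, if_neg hnot]
    exact hdown _ _ hxw (by rw [rank_center, hrank]; decide)
  · have hrank : rank w = 0 := by
      simp only [rank, if_neg hnc, if_pos (⟨i, hw, hF.1.1 _ _ hwx⟩ : ∃ j, w ∈ L j ∧ E w (x j))]
    exact hdown _ _ hwx (by rw [rank_center, hrank]; decide)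

end FeedbackArcSet

theorem Finset.card_le_card_of_pairwiseDisjoint_of_inter_nonempty {α : Type*} [DecidableEq α]
    {C : Finset (Finset α)} {A : Finset α}
    (hC : ∀ S ∈ C, ∀ S' ∈ C, S ≠ S' → Disjoint S S') (hA : ∀ S ∈ C, (S ∩ A).Nonempty) :
    C.card ≤ A.card := by
  have hdisj : (C : Set (Finset α)).PairwiseDisjoint (· ∩ A) := fun S hS S' hS' hne =>
    (hC S hS S' hS' hne).mono inter_subset_left inter_subset_left
  calc C.card = ∑ S ∈ C, 1 := card_eq_sum_ones C
    _ ≤ ∑ S ∈ C, (S ∩ A).card := sum_le_sum fun S hS => (hA S hS).card_pos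
    _ = (C.biUnion (· ∩ A)).card := (card_biUnion hdisj).symm
    _ ≤ A.card := card_le_card (biUnion_subset.2 fun _ _ => inter_subset_right)

section Multipartite

variable {V : Type*} {k : ℕ} {parts : Fin k → Finset V} {E F : V → V → Prop}

theorem pairwise_disjoint_of_existsUnique_mem (hpart : ∀ v : V, ∃! i, v ∈ parts i) :
    Pairwise (Disjoint on parts) := fun _ _ hij =>
  disjoint_left.2 fun v hi hj => hij ((hpart v).unique hi hj)

theorem IsTransClique.exists_mem_parts (hpart : ∀ v : V, ∃! i, v ∈ parts i)
    (hsame : ∀ i, ∀ u ∈ parts i, ∀ v ∈ parts i, ¬ E u v) (hFE : ∀ u v, F u v → E u v)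
    {S : Finset V} (hS : IsTransClique F k S) (i : Fin k) : ∃ u ∈ S, u ∈ parts i := by
  choose cl hcl _ using hpart
  have hinj : Set.InjOn cl S := fun u hu v hv huv => by
    by_contra hne
    have hv' : v ∈ parts (cl u) := huv ▸ hcl v
    rcases hS.2.1 u hu v hv hne with h | h
    · exact hsame _ u (hcl u) v hv' (hFE u v h)
    · exact hsame _ v hv' u (hcl u) (hFE v u h)
  obtain ⟨u, hu, rfl⟩ := surjOn_of_injOn_of_card_le cl (fun _ _ => mem_coe.2 (mem_univ _))
    hinj (by rw [card_univ, Fintype.card_fin, hS.1]) (mem_univ i)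
  exact ⟨u, hu, hcl u⟩

theorem IsTransClique.inter_sdiff_image_nonempty [DecidableEq V] {i₀ : Fin k}
    (hpart : ∀ v : V, ∃! i, v ∈ parts i) (hsame : ∀ i, ∀ u ∈ parts i, ∀ v ∈ parts i, ¬ E u v)
    (hFE : ∀ u v, F u v → E u v) (x : {i // i ≠ i₀} → V)
    (hstar : ∀ i, ∀ w ∈ parts i.1, ¬ F (x i) w ∧ ¬ F w (x i))
    {S : Finset V} (hS : IsTransClique F k S) :
    (S ∩ (parts i₀ \ univ.image x)).Nonempty := by
  obtain ⟨u, huS, hu⟩ := hS.exists_mem_parts hpart hsame hFE i₀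
  refine ⟨u, mem_inter.2 ⟨huS, mem_sdiff.2 ⟨hu, fun hux => ?_⟩⟩⟩
  obtain ⟨i, -, rfl⟩ := mem_image.1 hux
  obtain ⟨w, hwS, hw⟩ := hS.exists_mem_parts hpart hsame hFE i.1
  have hne : x i ≠ w := fun h => i.2 ((hpart w).unique hw (h ▸ hu))
  rcases hS.2.1 _ huS w hwS hne with h | h
  exacts [(hstar i w hw).1 h, (hstar i w hw).2 h]

end Multipartite

/-- Let `G = (E)` be a `k`-partite tournament with vertex classes `parts 0, …, parts (k-1)`
where the class `parts i₀` has `s ≥ k − 1` vertices. Then some minimal feedback arc set of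
`G` has at most `s − k + 1` pairwise disjoint transitive `k`-cliques; in particular
`f_k(G) ≤ s − k + 1`. -/
theorem exists_min_fas_with_few_disjoint_cliques {V : Type*} [Fintype V] [DecidableEq V]
    (k : ℕ) (parts : Fin k → Finset V) (E : V → V → Prop)
    (hpart : ∀ v : V, ∃! i, v ∈ parts i)
    (hsame : ∀ i, ∀ u ∈ parts i, ∀ v ∈ parts i, ¬ E u v)
    (hcross : ∀ i j, i ≠ j → ∀ u ∈ parts i, ∀ v ∈ parts j, (E u v ↔ ¬ E v u))
    (i₀ : Fin k) (s : ℕ) (hs : (parts i₀).card = s) (hsk : k - 1 ≤ s) :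
    (∃ F : V → V → Prop, IsMinFAS E F ∧
      ∀ C : Finset (Finset V), (∀ S ∈ C, IsTransClique F k S) →
        (∀ S ∈ C, ∀ S' ∈ C, S ≠ S' → Disjoint S S') →
        C.card ≤ s + 1 - k) ∧
    (∀ m : ℕ,
      (∀ F : V → V → Prop, IsMinFAS E F →
        ∃ C : Finset (Finset V), C.card = m ∧ (∀ S ∈ C, IsTransClique F k S) ∧
          (∀ S ∈ C, ∀ S' ∈ C, S ≠ S' → Disjoint S S')) →
      m ≤ s + 1 - k) := by
  have hclasses : Fintype.card {i // i ≠ i₀} = k - 1 := by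
    simp [Fintype.card_subtype_compl]
  have hcard : Fintype.card {i // i ≠ i₀} ≤ Fintype.card (parts i₀) := by
    rwa [hclasses, Fintype.card_coe, hs]
  obtain ⟨emb⟩ := Embedding.nonempty_of_card_le hcard
  let x : {i // i ≠ i₀} → V := fun i => emb i
  have hx : Injective x := fun _ _ h => emb.injective (Subtype.ext h)
  obtain ⟨F, hF, hstar⟩ := exists_isMinFAS_avoiding_stars x (fun i => parts i.1)
    ((pairwise_disjoint_of_existsUnique_mem hpart).comp_of_injective Subtype.val_injective)
    (fun i j hj => i.2 ((hpart _).unique hj (emb j).2))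
    (fun i w hw => (hcross i₀ i.1 (Ne.symm i.2) _ (emb i).2 w hw).1)
  have hbound : ∀ C : Finset (Finset V), (∀ S ∈ C, IsTransClique F k S) →
      (∀ S ∈ C, ∀ S' ∈ C, S ≠ S' → Disjoint S S') → C.card ≤ s + 1 - k := fun C hC hD =>
    calc C.card ≤ (parts i₀ \ univ.image x).card :=
          card_le_card_of_pairwiseDisjoint_of_inter_nonempty hD fun S hS =>
            (hC S hS).inter_sdiff_image_nonempty hpart hsame hF.1.1 x hstar
      _ = s + 1 - k := by
          rw [card_sdiff_of_subset (image_subset_iff.2 fun i _ => (emb i).2),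
            card_image_of_injective _ hx, card_univ, hclasses, hs]
          have := i₀.pos
          omega
  refine ⟨⟨F, hF, hbound⟩, fun m hm => ?_⟩
  obtain ⟨C, rfl, hC, hD⟩ := hm F hF
  exact hbound C hC hD
end

section
/- Let G be a k-partite tournament with classes V_1,…,V_k, let u_1,…,u_{k−1} be distinct vertices of V_k, and let F be the set of all edges of G connecting u_i to a vertex of V_i, for i = 1,…,k−1. Then F is a feedback arc set of G, i.e., the complement of F in G is acyclic. -/
/-! Every star edge has an endpoint in one of the first `k - 1` classes, and such a leaf is
joined only to its centre. Since `E` is asymmetric between different classes, a leaf is a source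
or a sink of the star edges, so it lies on no cycle, whereas both endpoints of an edge of a cycle
lie on that cycle. -/

section Acyclic

variable {V : Type*}

theorem IsAcyclicRel.mono {r s : V → V → Prop} (hrs : ∀ a b, r a b → s a b)
    (hs : IsAcyclicRel s) : IsAcyclicRel r :=
  fun v hv => hs v (Relation.TransGen.mono hrs _ _ hv)

theorem isAcyclicRel_of_every_edge_meets_source_or_sink {r : V → V → Prop} (L : V → Prop)
    (hedge : ∀ a b, r a b → L a ∨ L b) (hL : ∀ v, L v → ∀ x y, r x v → ¬ r v y) :
    IsAcyclicRel r := by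
  have hnot : ∀ w, Relation.TransGen r w w → ¬ L w := fun w hw hLw => by
    obtain ⟨a, -, haw⟩ := Relation.TransGen.tail'_iff.mp hw
    obtain ⟨b, hwb, -⟩ := Relation.TransGen.head'_iff.mp hw
    exact hL w hLw a b haw hwb
  intro v hv
  obtain ⟨x, hvx, hxv⟩ := Relation.TransGen.head'_iff.mp hv
  exact (hedge v x hvx).elim (hnot v hv) (hnot x (Relation.TransGen.tail' hxv hvx))

theorem isFAS_of_isAcyclicRel {E S : V → V → Prop}
    (h : IsAcyclicRel fun a b => E a b ∧ S a b) : IsFAS E fun a b => E a b ∧ ¬ S a b :=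
  ⟨fun _ _ hab => hab.1,
    h.mono fun _ _ ⟨hab, hF⟩ => ⟨hab, not_not.mp fun hS => hF ⟨hab, hS⟩⟩⟩

end Acyclic

section Stars

variable {V : Type*} {k : ℕ} (parts : Fin k → Finset V) (u : Fin (k - 1) → V)

def IsStarEdge (a b : V) : Prop :=
  ∃ i : Fin (k - 1), (a = u i ∧ b ∈ parts (Fin.castLE (Nat.sub_le k 1) i)) ∨
    (b = u i ∧ a ∈ parts (Fin.castLE (Nat.sub_le k 1) i))

variable {parts u}

theorem isStarEdge_comm {a b : V} : IsStarEdge parts u a b ↔ IsStarEdge parts u b a :=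
  exists_congr fun _ => or_comm

theorem castLE_ne_last (hk : 1 ≤ k) (i : Fin (k - 1)) :
    Fin.castLE (Nat.sub_le k 1) i ≠ ⟨k - 1, Nat.sub_lt hk Nat.one_pos⟩ :=
  Fin.ne_of_val_ne i.isLt.ne

variable (hk : 1 ≤ k) (hpart : ∀ v : V, ∃! i, v ∈ parts i)
  (hu : ∀ i, u i ∈ parts ⟨k - 1, Nat.sub_lt hk Nat.one_pos⟩)
include hk hpart hu

theorem IsStarEdge.eq_center {v x : V} {i : Fin (k - 1)}
    (hv : v ∈ parts (Fin.castLE (Nat.sub_le k 1) i)) (h : IsStarEdge parts u v x) : x = u i := by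
  obtain ⟨j, ⟨rfl, -⟩ | ⟨rfl, hj⟩⟩ := h
  · exact absurd ((hpart _).unique hv (hu j)) (castLE_ne_last hk i)
  · rw [Fin.castLE_injective _ ((hpart v).unique hv hj)]

theorem not_isStarEdge_of_isStarEdge_of_mem_leaf {E : V → V → Prop}
    (hasymm : ∀ i j, i ≠ j → ∀ a ∈ parts i, ∀ b ∈ parts j, E a b → ¬ E b a)
    {v x y : V} {i : Fin (k - 1)} (hv : v ∈ parts (Fin.castLE (Nat.sub_le k 1) i))
    (hxv : E x v ∧ IsStarEdge parts u x v) : ¬ (E v y ∧ IsStarEdge parts u v y) := by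
  rintro ⟨hvy, hy⟩
  obtain rfl := (isStarEdge_comm.mp hxv.2).eq_center hk hpart hu hv
  obtain rfl := hy.eq_center hk hpart hu hv
  exact hasymm _ _ (castLE_ne_last hk i) v hv _ (hu i) hvy hxv.1

end Stars

theorem star_removal_is_feedback_arc_set_general {V : Type*}
    (k : ℕ) (hk : 1 ≤ k) (parts : Fin k → Finset V) (E : V → V → Prop)
    (hpart : ∀ v : V, ∃! i, v ∈ parts i)
    (hcross : ∀ i j, i ≠ j → ∀ u ∈ parts i, ∀ v ∈ parts j, (E u v ↔ ¬ E v u))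
    (u : Fin (k - 1) → V)
    (hu : ∀ i, u i ∈ parts ⟨k - 1, Nat.sub_lt hk Nat.one_pos⟩) :
    IsAcyclicRel (fun a b => E a b ∧
      ∃ i : Fin (k - 1), (a = u i ∧ b ∈ parts (Fin.castLE (Nat.sub_le k 1) i)) ∨
        (b = u i ∧ a ∈ parts (Fin.castLE (Nat.sub_le k 1) i))) ∧
    IsFAS E (fun a b => E a b ∧
      ¬ ∃ i : Fin (k - 1), (a = u i ∧ b ∈ parts (Fin.castLE (Nat.sub_le k 1) i)) ∨
        (b = u i ∧ a ∈ parts (Fin.castLE (Nat.sub_le k 1) i))) := by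
  have hacyclic : IsAcyclicRel fun a b => E a b ∧ IsStarEdge parts u a b :=
    isAcyclicRel_of_every_edge_meets_source_or_sink
      (fun v => ∃ i : Fin (k - 1), v ∈ parts (Fin.castLE (Nat.sub_le k 1) i))
      (fun _ _ ⟨_, i, h⟩ => h.elim (fun h => .inr ⟨i, h.2⟩) (fun h => .inl ⟨i, h.2⟩))
      (fun _ ⟨_, hv⟩ _ _ hxv => not_isStarEdge_of_isStarEdge_of_mem_leaf hk hpart hu
        (fun i j hij a ha b hb => (hcross i j hij a ha b hb).mp) hv hxv)
  exact ⟨hacyclic, isFAS_of_isAcyclicRel hacyclic⟩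

/-- Let `G = (E)` be a `k`-partite tournament with classes `parts 0, …, parts (k-1)`, let
`u 0, …, u (k-2)` be distinct vertices of the last class, and let `Star` be the set of all
edges of `G` connecting `u i` to a vertex of class `i` (for `i = 0, …, k-2`).  Then the
set of edges of `G` formed by the stars is acyclic, so removing it leaves an acyclic
graph's complement: the set of all remaining edges is a feedback arc set of `G`. -/
theorem star_removal_is_feedback_arc_set {V : Type*} [Fintype V] [DecidableEq V]
    (k : ℕ) (hk : 1 ≤ k) (parts : Fin k → Finset V) (E : V → V → Prop)
    (hpart : ∀ v : V, ∃! i, v ∈ parts i)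
    (hsame : ∀ i, ∀ u ∈ parts i, ∀ v ∈ parts i, ¬ E u v)
    (hcross : ∀ i j, i ≠ j → ∀ u ∈ parts i, ∀ v ∈ parts j, (E u v ↔ ¬ E v u))
    (u : Fin (k - 1) → V) (huinj : Function.Injective u)
    (hu : ∀ i, u i ∈ parts ⟨k - 1, Nat.sub_lt hk Nat.one_pos⟩) :
    IsAcyclicRel (fun a b => E a b ∧
      ∃ i : Fin (k - 1), (a = u i ∧ b ∈ parts (Fin.castLE (Nat.sub_le k 1) i)) ∨
        (b = u i ∧ a ∈ parts (Fin.castLE (Nat.sub_le k 1) i))) ∧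
    IsFAS E (fun a b => E a b ∧
      ¬ ∃ i : Fin (k - 1), (a = u i ∧ b ∈ parts (Fin.castLE (Nat.sub_le k 1) i)) ∨
        (b = u i ∧ a ∈ parts (Fin.castLE (Nat.sub_le k 1) i))) :=
  star_removal_is_feedback_arc_set_general k hk parts E hpart hcross u hu
end

section
/- For all sufficiently large n, a random orientation T of the complete bipartite graph with parts A_1, A_2 of size n satisfies the following with probability at least 1 − 1/n: for every permutation π of the vertices and all sets R ⊆ A_1, S ⊆ A_2 with |R| ≥ n/20 and |S| ≥ n/20, there is at least one edge of L_π(T) between R and S. -/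
/-- The oriented complete bipartite graph determined by the orientation data `ω`:
the edge between left vertex `a` and right vertex `b` is directed from `a` to `b`
iff `ω a b = true`. -/
def bipEdge {n : ℕ} (ω : Fin n → Fin n → Bool) :
    (Fin n ⊕ Fin n) → (Fin n ⊕ Fin n) → Prop
  | Sum.inl a, Sum.inr b => ω a b = true
  | Sum.inr b, Sum.inl a => ω a b = false
  | _, _ => False

/-- `u` and `v` are joined by an edge of `L_π(T)`, i.e. the edge of `T` between them
goes forward with respect to `π`. -/
def bipLAdj {n : ℕ} (ω : Fin n → Fin n → Bool) (π : Fin n ⊕ Fin n → ℕ)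
    (u v : Fin n ⊕ Fin n) : Prop :=
  (bipEdge ω u v ∧ π u < π v) ∨ (bipEdge ω v u ∧ π v < π u)

/-!
If `L_π(T)` has no edge between `R` and `S`, then every edge between `R` and `S` points
backwards with respect to `π`, so `T` is determined on `R × S` by the relative order of the
vertices. Only this relative order matters, and it is recorded by the rank function
`A₁ ⊔ A₂ → Fin (2n)`. A union bound over the `(2n)^{2n}` rank functions and the `2^n · 2^n`
pairs `(R, S)`, each pattern being met by at most `2^{n² - |R||S|} ≤ 2^{n² - n²/400}`
orientations, bounds the bad orientations by `2^{n²}/n` once `n` is large.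
-/

open Finset Fintype Function

theorem card_filter_forall_mem_prod_le {α β γ : Type*} [Fintype α] [Fintype β] [Fintype γ]
    [DecidableEq α] [DecidableEq β] [DecidableEq γ] (R : Finset α) (S : Finset β)
    (g : α → β → γ) :
    #{ω : α → β → γ | ∀ a ∈ R, ∀ b ∈ S, ω a b = g a b}
      ≤ card γ ^ (card α * card β - #R * #S) := by
  have hinj : Set.InjOn (fun ω : α → β → γ => fun p : ↥(R ×ˢ S)ᶜ => ω p.1.1 p.1.2)
      {ω | ∀ a ∈ R, ∀ b ∈ S, ω a b = g a b} := by
    intro ω hω ω' hω' heq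
    simp only [Set.mem_ofPred_eq] at hω hω'
    funext a b
    by_cases hab : (a, b) ∈ R ×ˢ S
    · rw [mem_product] at hab
      rw [hω a hab.1 b hab.2, hω' a hab.1 b hab.2]
    · exact congrFun heq ⟨(a, b), mem_compl.mpr hab⟩
  calc _ ≤ #(univ : Finset (↥(R ×ˢ S)ᶜ → γ)) :=
        card_le_card_of_injOn _ (fun _ _ => mem_coe.mpr (mem_univ _)) (by simpa using hinj)
    _ = card γ ^ (card α * card β - #R * #S) := by
        rw [card_univ, card_fun, card_coe, card_compl, card_product, card_prod]

theorem exists_fin_lt_iff_lt {α β : Type*} [Fintype α] [LinearOrder β] {π : α → β}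
    (hπ : Injective π) : ∃ ρ : α → Fin (card α), ∀ u v, ρ u < ρ v ↔ π u < π v := by
  have hs : #(univ.image π) = card α := by rw [card_image_of_injective _ hπ, card_univ]
  let e := (univ.image π).orderIsoOfFin hs
  refine ⟨fun v => e.symm ⟨π v, mem_image_of_mem _ (mem_univ v)⟩, fun u v => ?_⟩
  rw [e.symm.lt_iff_lt, Subtype.mk_lt_mk]

theorem eq_decide_of_not_bipLAdj {n : ℕ} {ω : Fin n → Fin n → Bool} {π : Fin n ⊕ Fin n → ℕ}
    {a b : Fin n} (hne : π (Sum.inl a) ≠ π (Sum.inr b))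
    (h : ¬ bipLAdj ω π (Sum.inl a) (Sum.inr b)) :
    ω a b = decide (π (Sum.inr b) < π (Sum.inl a)) := by
  simp only [bipLAdj, bipEdge, not_or, not_and, not_lt] at h
  cases hab : ω a b <;> simp [hab] at h ⊢ <;> omega

theorem two_thousand_mul_succ_le_two_pow {m : ℕ} (hm : 15 ≤ m) : 2000 * (m + 1) ≤ 2 ^ m := by
  induction m, hm using Nat.le_induction with
  | base => norm_num
  | succ k _ ih => rw [pow_succ]; omega

theorem union_bound_le_two_pow {n : ℕ} (hn : 15000 ≤ n) :
    (n + n) ^ (n + n) * (2 ^ n * 2 ^ n) * 2 ^ (n * n - n * n / 400) * n ≤ 2 ^ (n * n) := by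
  set m := n / 1000
  -- `2n ≤ 2^m` turns the `(2n)^{2n}` rank functions into `2^{2nm} ≤ 2^{n²/500}`.
  have h2n : n + n ≤ 2 ^ m := by have := two_thousand_mul_succ_le_two_pow (m := m) (by omega); omega
  have hexp : (n + n) * m + 3 * n ≤ n * n / 400 := by
    rw [Nat.le_div_iff_mul_le (by norm_num)]
    nlinarith [Nat.mul_le_mul_left n (show 1000 * m ≤ n by omega),
      Nat.mul_le_mul_left n (show 15 ≤ m by omega)]
  have hle : n * n / 400 ≤ n * n := Nat.div_le_self _ _
  calc _ ≤ (2 ^ m) ^ (n + n) * (2 ^ n * 2 ^ n) * 2 ^ (n * n - n * n / 400) * 2 ^ n := by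
        gcongr
        exact Nat.lt_two_pow_self.le
    _ = 2 ^ ((n + n) * m + 3 * n + (n * n - n * n / 400)) := by
        rw [← pow_mul, ← pow_add, ← pow_add, ← pow_add, ← pow_add]; ring_nf
    _ ≤ 2 ^ (n * n) := Nat.pow_le_pow_right (by norm_num) (by omega)

def HasForwardEdgeBetweenLargeSets {n : ℕ} (ω : Fin n → Fin n → Bool) : Prop :=
  ∀ (π : Fin n ⊕ Fin n → ℕ), Injective π →
    ∀ R S : Finset (Fin n), n ≤ 20 * R.card → n ≤ 20 * S.card →
      ∃ a ∈ R, ∃ b ∈ S, bipLAdj ω π (Sum.inl a) (Sum.inr b)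

section Counting

variable (n : ℕ)

def largeSets : Finset (Finset (Fin n)) := {R | n ≤ 20 * #R}

def backwardOn {m : ℕ} (ρ : Fin n ⊕ Fin n → Fin m) (R S : Finset (Fin n)) :
    Finset (Fin n → Fin n → Bool) :=
  {ω | ∀ a ∈ R, ∀ b ∈ S, ω a b = decide (ρ (Sum.inr b) < ρ (Sum.inl a))}

open Classical in
theorem filter_not_hasForwardEdge_subset :
    ({ω | ¬ HasForwardEdgeBetweenLargeSets ω} : Finset (Fin n → Fin n → Bool)) ⊆
      (univ ×ˢ largeSets n ×ˢ largeSets n).biUnion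
        fun x : (Fin n ⊕ Fin n → Fin (card (Fin n ⊕ Fin n))) × _ × _ =>
          backwardOn n x.1 x.2.1 x.2.2 := by
  intro ω
  simp only [HasForwardEdgeBetweenLargeSets, mem_filter, mem_univ, true_and, not_forall,
    not_exists, not_and]
  intro hω
  obtain ⟨π, hπ, R, S, hR, hS, hno⟩ := hω
  obtain ⟨ρ, hρ⟩ := exists_fin_lt_iff_lt hπ
  simp only [mem_biUnion, mem_product, mem_univ, true_and, largeSets, backwardOn, mem_filter]
  refine ⟨(ρ, R, S), ⟨hR, hS⟩, fun a ha b hb => ?_⟩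
  rw [eq_decide_of_not_bipLAdj (hπ.ne Sum.inl_ne_inr) (hno a ha b hb)]
  simp only [hρ]

theorem card_backwardOn_le {m : ℕ} (ρ : Fin n ⊕ Fin n → Fin m) {R S : Finset (Fin n)}
    (hR : R ∈ largeSets n) (hS : S ∈ largeSets n) :
    #(backwardOn n ρ R S) ≤ 2 ^ (n * n - n * n / 400) := by
  simp only [largeSets, mem_filter, mem_univ, true_and] at hR hS
  have hRS : n * n / 400 ≤ #R * #S := by
    rw [Nat.div_le_iff_le_mul_add_pred (by norm_num)]
    nlinarith [Nat.mul_le_mul hR hS]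
  calc _ ≤ 2 ^ (n * n - #R * #S) := by
        unfold backwardOn
        -- `convert` only reconciles two different `Decidable` instances of the filter predicate.
        convert card_filter_forall_mem_prod_le R S
          (fun a b => decide (ρ (Sum.inr b) < ρ (Sum.inl a))) <;> simp
    _ ≤ _ := Nat.pow_le_pow_right (by norm_num) (Nat.sub_le_sub_left hRS _)

open Classical in
theorem card_filter_not_hasForwardEdge_le :
    #{ω : Fin n → Fin n → Bool | ¬ HasForwardEdgeBetweenLargeSets ω}
      ≤ (n + n) ^ (n + n) * (2 ^ n * 2 ^ n) * 2 ^ (n * n - n * n / 400) := by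
  refine (card_le_card (filter_not_hasForwardEdge_subset n)).trans <|
    (card_biUnion_le_card_mul _ _ (2 ^ (n * n - n * n / 400)) fun x hx => ?_).trans ?_
  · simp only [mem_product] at hx
    exact card_backwardOn_le n x.1 hx.2.1 hx.2.2
  · gcongr
    calc _ ≤ #(univ : Finset ((Fin n ⊕ Fin n → Fin (card (Fin n ⊕ Fin n))) ×
          Finset (Fin n) × Finset (Fin n))) := card_le_univ _
      _ = _ := by simp [card_univ]

end Counting

/-- For all sufficiently large `n`, with probability at least `1 − 1/n` a random
orientation of `K_{n,n}` is such that for every vertex order `π` and all `R ⊆ A₁`,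
`S ⊆ A₂` with `|R| ≥ n/20` and `|S| ≥ n/20`, there is an edge of `L_π(T)` between `R`
and `S` (stated by counting: the bad orientations number at most `2^{n·n}/n`). -/
theorem whp_edge_between_large_sets : ∃ N : ℕ, ∀ n ≥ N,
    Nat.card {ω : Fin n → Fin n → Bool //
        ¬ ∀ (π : Fin n ⊕ Fin n → ℕ), Function.Injective π →
          ∀ R S : Finset (Fin n), n ≤ 20 * R.card → n ≤ 20 * S.card →
            ∃ a ∈ R, ∃ b ∈ S, bipLAdj ω π (Sum.inl a) (Sum.inr b)} * n
      ≤ 2 ^ (n * n) := by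
  classical
  refine ⟨15000, fun n hn => ?_⟩
  change Nat.card {ω : Fin n → Fin n → Bool // ¬ HasForwardEdgeBetweenLargeSets ω} * n ≤ _
  rw [Nat.card_eq_fintype_card, Fintype.card_subtype]
  calc _ ≤ (n + n) ^ (n + n) * (2 ^ n * 2 ^ n) * 2 ^ (n * n - n * n / 400) * n := by
        gcongr
        convert card_filter_not_hasForwardEdge_le n
    _ ≤ 2 ^ (n * n) := union_bound_le_two_pow hn
end

section
/- Let T be an orientation of the complete bipartite graph with parts A_1, A_2 of size n, let π be a permutation of the vertices, and suppose that for every ordered pair (u,v) of distinct vertices in the same part and every choice of signs D ∈ {+,−}², the number of vertices consistent with (u,v) according to D is at most 1.1n/4. Then at most one vertex of A_1 has degree smaller than n/18 in L_π(T), and at most one vertex of A_2 has degree smaller than n/18 in L_π(T). (Assume n ≥ some absolute constant, e.g. n ≥ 100.) -/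
/-!
Suppose `u` and `v` lie in the same part, with `π u < π v`, and both have small degree in
`L_π(T)`. Every vertex `w` of the other part is adjacent to both. If `u → w → v`, then `w` is
counted in the degree of `u` (when `π u < π w`) or of `v` (when `π w ≤ π u < π v`). Every other
`w` is consistent with `(u, v)` for one of the three remaining sign patterns. Hence
`n < 2 · n/18 + 3 · 1.1n/4 < n`.
-/

open Function

section

variable {V : Type*} (E : V → V → Prop)

/-- The degree of `u` in `L_π(T)`. -/
noncomputable def orderedDegree {α : Type*} [LT α] (π : V → α) (u : V) : ℕ :=
  Nat.card {w : V // (E u w ∧ π u < π w) ∨ (E w u ∧ π w < π u)}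

/-- The number of vertices `D`-consistent with `(u, v)`; `true` stands for `+`. -/
noncomputable def consistentCount (u v : V) (D : Bool × Bool) : ℕ :=
  Nat.card {w : V // (if D.1 then E u w else E w u) ∧ (if D.2 then E v w else E w v)}

theorem ncard_le_orderedDegree_add_consistentCount [Finite V] {α : Type*} [LinearOrder α]
    (π : V → α) {u v : V} (huv : π u < π v) {S : Set V}
    (hu : ∀ w ∈ S, E u w ∨ E w u) (hv : ∀ w ∈ S, E v w ∨ E w v) :
    S.ncard ≤ orderedDegree E π u + orderedDegree E π v + consistentCount E u v (true, true)
      + consistentCount E u v (false, true) + consistentCount E u v (false, false) := by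
  have hcard (p : V → Prop) : Nat.card {w // p w} = {w | p w}.ncard := Nat.card_coe_set_eq _
  simp only [orderedDegree, consistentCount, hcard, Bool.false_eq_true, if_true, if_false]
  have hcover : S ⊆ {w | (E u w ∧ π u < π w) ∨ (E w u ∧ π w < π u)}
      ∪ {w | (E v w ∧ π v < π w) ∨ (E w v ∧ π w < π v)} ∪ {w | E u w ∧ E v w}
      ∪ {w | E w u ∧ E v w} ∪ {w | E w u ∧ E w v} := by
    intro w hw
    simp only [Set.mem_union, Set.mem_ofPred_eq]
    rcases hu w hw with hEu | hEu <;> rcases hv w hw with hEv | hEv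
    · tauto
    -- the pattern `(+, -)` is absorbed by the two degrees
    · rcases lt_or_ge (π u) (π w) with h | h
      · tauto
      · have : π w < π v := h.trans_lt huv
        tauto
    all_goals tauto
  calc S.ncard ≤ _ := Set.ncard_le_ncard hcover
    _ ≤ _ := by
      refine (Set.ncard_union_le _ _).trans (add_le_add_left ?_ _)
      refine (Set.ncard_union_le _ _).trans (add_le_add_left ?_ _)
      refine (Set.ncard_union_le _ _).trans (add_le_add_left ?_ _)
      exact Set.ncard_union_le _ _

theorem card_low_orderedDegree_le_one [Finite V] {α ι : Type*} [LinearOrder α] [Finite ι]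
    (π : V → α) (part : ι → V) (hπ : Injective (π ∘ part)) (S : Set V)
    (horient : ∀ a, ∀ w ∈ S, E (part a) w ∨ E w (part a)) {d c : ℝ}
    (hcons : ∀ a a', a ≠ a' → ∀ D, (consistentCount E (part a) (part a') D : ℝ) ≤ c)
    (hbudget : 2 * d + 3 * c ≤ S.ncard) :
    Nat.card {a : ι // (orderedDegree E π (part a) : ℝ) < d} ≤ 1 := by
  have key : ∀ a a', π (part a) < π (part a') → (orderedDegree E π (part a) : ℝ) < d →
      (orderedDegree E π (part a') : ℝ) < d → False := by
    intro a a' hlt ha ha'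
    have hne : a ≠ a' := fun h => hlt.ne (congrArg (π ∘ part) h)
    have hcover := Nat.cast_le (α := ℝ) |>.2 <|
      ncard_le_orderedDegree_add_consistentCount E π hlt (horient a) (horient a')
    push_cast at hcover
    linarith [hcons a a' hne (true, true), hcons a a' hne (false, true),
      hcons a a' hne (false, false)]
  rw [Finite.card_le_one_iff_subsingleton]
  refine ⟨fun ⟨a, ha⟩ ⟨a', ha'⟩ => Subtype.ext ?_⟩
  by_contra hne
  rcases (hπ.ne hne).lt_or_gt with h | h
  · exact key a a' h ha ha'
  · exact key a' a h ha' ha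

end

theorem at_most_one_low_degree_vertex_general (n : ℕ)
    (E : (Fin n ⊕ Fin n) → (Fin n ⊕ Fin n) → Prop)
    (hor : ∀ a b : Fin n, E (Sum.inl a) (Sum.inr b) ↔ ¬ E (Sum.inr b) (Sum.inl a))
    (π : Fin n ⊕ Fin n → ℕ) (hπ : Function.Injective π)
    (hcons : ∀ u v : Fin n ⊕ Fin n, u.isLeft = v.isLeft → u ≠ v → ∀ D : Bool × Bool,
      (Nat.card {w : Fin n ⊕ Fin n //
          (if D.1 then E u w else E w u) ∧ (if D.2 then E v w else E w v)} : ℝ)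
        ≤ 1.1 * n / 4) :
    Nat.card {a : Fin n //
        (Nat.card {w : Fin n ⊕ Fin n //
            (E (Sum.inl a) w ∧ π (Sum.inl a) < π w) ∨
              (E w (Sum.inl a) ∧ π w < π (Sum.inl a))} : ℝ) < n / 18} ≤ 1 ∧
    Nat.card {b : Fin n //
        (Nat.card {w : Fin n ⊕ Fin n //
            (E (Sum.inr b) w ∧ π (Sum.inr b) < π w) ∨
              (E w (Sum.inr b) ∧ π w < π (Sum.inr b))} : ℝ) < n / 18} ≤ 1 := by
  have hbudget : 2 * (n / 18 : ℝ) + 3 * (1.1 * n / 4) ≤ n := by linarith [n.cast_nonneg (α := ℝ)]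
  constructor
  · refine card_low_orderedDegree_le_one E π Sum.inl (hπ.comp Sum.inl_injective)
      (Set.range Sum.inr) ?_ (fun a a' h => hcons _ _ rfl (Sum.inl_injective.ne h)) ?_
    · rintro a _ ⟨b, rfl⟩
      have := hor a b
      tauto
    · rwa [Set.ncard_range_of_injective Sum.inr_injective, Nat.card_fin]
  · refine card_low_orderedDegree_le_one E π Sum.inr (hπ.comp Sum.inr_injective)
      (Set.range Sum.inl) ?_ (fun b b' h => hcons _ _ rfl (Sum.inr_injective.ne h)) ?_
    · rintro b _ ⟨a, rfl⟩
      have := hor a b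
      tauto
    · rwa [Set.ncard_range_of_injective Sum.inl_injective, Nat.card_fin]

/-- Let `T = (E)` be an orientation of `K_{n,n}` (parts the left and right copies of
`Fin n`) and `π` an injective vertex labelling. Suppose that for every ordered pair
`(u,v)` of distinct vertices in the same part and every sign pattern `D`, the number of
vertices `D`-consistent with `(u,v)` is at most `1.1n/4`.  Then at most one vertex of
each part has degree smaller than `n/18` in `L_π(T)`. -/
theorem at_most_one_low_degree_vertex (n : ℕ) (hn : 100 ≤ n)
    (E : (Fin n ⊕ Fin n) → (Fin n ⊕ Fin n) → Prop)
    (hor : ∀ a b : Fin n, E (Sum.inl a) (Sum.inr b) ↔ ¬ E (Sum.inr b) (Sum.inl a))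
    (hsame : ∀ a b : Fin n, ¬ E (Sum.inl a) (Sum.inl b) ∧ ¬ E (Sum.inr a) (Sum.inr b))
    (π : Fin n ⊕ Fin n → ℕ) (hπ : Function.Injective π)
    (hcons : ∀ u v : Fin n ⊕ Fin n, u.isLeft = v.isLeft → u ≠ v → ∀ D : Bool × Bool,
      (Nat.card {w : Fin n ⊕ Fin n //
          (if D.1 then E u w else E w u) ∧ (if D.2 then E v w else E w v)} : ℝ)
        ≤ 1.1 * n / 4) :
    Nat.card {a : Fin n //
        (Nat.card {w : Fin n ⊕ Fin n //
            (E (Sum.inl a) w ∧ π (Sum.inl a) < π w) ∨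
              (E w (Sum.inl a) ∧ π w < π (Sum.inl a))} : ℝ) < n / 18} ≤ 1 ∧
    Nat.card {b : Fin n //
        (Nat.card {w : Fin n ⊕ Fin n //
            (E (Sum.inr b) w ∧ π (Sum.inr b) < π w) ∨
              (E w (Sum.inr b) ∧ π w < π (Sum.inr b))} : ℝ) < n / 18} ≤ 1 :=
  at_most_one_low_degree_vertex_general n E hor π hπ hcons
end

section
/- Asymptotically almost surely, a random orientation T of the complete bipartite graph with both parts of size n has the property that every minimal feedback arc set of T contains a matching of size n − 1. -/
open Finset Filter Topology

lemma Nat.card_subtype_le_of_imp {X : Type*} [Finite X] {p q : X → Prop}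
    (h : ∀ x, p x → q x) : Nat.card {x // p x} ≤ Nat.card {x // q x} :=
  Nat.card_le_card_of_injective _ (Subtype.impEmbedding p q h).injective

lemma Nat.card_subtype_exists_le_sum {ι X : Type*} [Finite X] (I : Finset ι)
    (p : ι → X → Prop) :
    Nat.card {x // ∃ i ∈ I, p i x} ≤ ∑ i ∈ I, Nat.card {x // p i x} := by
  classical
  have := Fintype.ofFinite X
  simp only [Nat.card_eq_fintype_card, Fintype.card_subtype]
  calc #(univ.filter fun x => ∃ i ∈ I, p i x)
      ≤ #(I.biUnion fun i => univ.filter (p i)) := card_le_card fun x => by simp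
    _ ≤ _ := card_biUnion_le

theorem Finset.exists_injective_of_card_le_card_biUnion_add {ι α : Type*} [DecidableEq α]
    (t : ι → Finset α) (d : ℕ) (h : ∀ s : Finset ι, #s ≤ #(s.biUnion t) + d) :
    ∃ f : ι → α ⊕ Fin d, Function.Injective f ∧ ∀ i a, f i = .inl a → a ∈ t i := by
  -- `d` extra right vertices adjacent to everything turn the deficiency into Hall's condition
  let t' : ι → Finset (α ⊕ Fin d) := fun i => (t i).map .inl ∪ univ.map .inr
  have hall : ∀ s : Finset ι, #s ≤ #(s.biUnion t') := by
    intro s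
    rcases s.eq_empty_or_nonempty with rfl | ⟨i, hi⟩
    · simp
    have hunion : s.biUnion t' = (s.biUnion t).map .inl ∪ univ.map .inr := by
      ext (a | k) <;> simp [t']
      exact ⟨i, hi⟩
    rw [hunion, card_union_of_disjoint (by simp [disjoint_left]), card_map, card_map, card_univ,
      Fintype.card_fin]
    exact h s
  obtain ⟨f, hf, hft⟩ := (all_card_le_biUnion_card_iff_exists_injective t').mp hall
  exact ⟨f, hf, fun i a hi => by simpa [t', hi] using hft i⟩

theorem Finset.exists_matching_of_card_le_card_biUnion_add {ι α : Type*} [Fintype ι]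
    [DecidableEq α] (t : ι → Finset α) (d : ℕ) (h : ∀ s : Finset ι, #s ≤ #(s.biUnion t) + d) :
    ∃ M : Finset (ι × α), #M = Fintype.card ι - d ∧ (∀ p ∈ M, p.2 ∈ t p.1) ∧
      ∀ p ∈ M, ∀ q ∈ M, p ≠ q → p.1 ≠ q.1 ∧ p.2 ≠ q.2 := by
  classical
  obtain ⟨f, hf, hft⟩ := exists_injective_of_card_le_card_biUnion_add t d h
  let M₀ : Finset (ι × α) := univ.filterMap (fun i => (f i).getLeft?.map (Prod.mk i))
    (fun i j p hi hj => by
      simp only [Option.mem_def, Option.map_eq_some_iff] at hi hj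
      obtain ⟨_, -, rfl⟩ := hi
      obtain ⟨_, -, hj⟩ := hj
      exact (congrArg Prod.fst hj).symm)
  have hmem₀ : ∀ p, p ∈ M₀ ↔ f p.1 = .inl p.2 := by
    rintro ⟨i, a⟩
    simp [M₀]
  have hM₀ : Fintype.card ι - d ≤ #M₀ := by
    have hcover : univ ⊆ M₀.image Prod.fst ∪ univ.filter fun i => (f i).isRight := by
      intro i _
      rcases hi : f i with a | k
      · exact mem_union_left _ (mem_image.mpr ⟨(i, a), (hmem₀ _).mpr hi, rfl⟩)
      · exact mem_union_right _ (by simp [hi])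
    have hright : #(univ.filter fun i => (f i).isRight) ≤ d := by
      simpa using card_le_card_of_injOn f (t := univ.map (.inr : Fin d ↪ α ⊕ Fin d))
        (fun i hi => by
          obtain ⟨k, hk⟩ := Sum.isRight_iff.mp (mem_filter.mp hi).2
          simp [hk]) hf.injOn
    have := (card_le_card hcover).trans (card_union_le _ _)
    have := card_image_le (s := M₀) (f := Prod.fst)
    simp only [card_univ] at *
    omega
  obtain ⟨M, hMsub, hMcard⟩ := exists_subset_card_eq hM₀
  have hmem : ∀ p ∈ M, f p.1 = .inl p.2 := fun p hp => (hmem₀ p).mp (hMsub hp)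
  refine ⟨M, hMcard, fun p hp => hft _ _ (hmem p hp),
    fun p hp q hq hpq => ⟨fun h₁ => ?_, fun h₂ => ?_⟩⟩
  · exact hpq (Prod.ext h₁ (Sum.inl_injective ((hmem p hp).symm.trans (h₁ ▸ hmem q hq))))
  · exact hpq (Prod.ext (hf ((hmem p hp).trans (h₂ ▸ (hmem q hq).symm))) h₂)

section RowChain
variable {α β : Type*}

def row (ω : α → β → Bool) (B : Finset β) (a : α) : Finset β :=
  B.filter fun b => ω a b

def RowChain (ω : α → β → Bool) (A : Finset α) (B : Finset β) : Prop :=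
  ∀ a₁ ∈ A, ∀ a₂ ∈ A, row ω B a₁ ⊆ row ω B a₂ ∨ row ω B a₂ ⊆ row ω B a₁

variable {ω ω' : α → β → Bool} {A : Finset α} {B : Finset β}

lemma RowChain.row_subset_of_card_le (hω : RowChain ω A B) {a₁ a₂ : α} (h₁ : a₁ ∈ A)
    (h₂ : a₂ ∈ A) (hcard : #(row ω B a₁) ≤ #(row ω B a₂)) : row ω B a₁ ⊆ row ω B a₂ :=
  (hω a₁ h₁ a₂ h₂).elim id fun h => (eq_of_subset_of_card_le h hcard).ge

lemma RowChain.apply_eq_true_iff (hω : RowChain ω A B) {a : α} {b : β} (ha : a ∈ A)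
    (hb : b ∈ B) :
    ω a b = true ↔
      #(A.filter fun a' => #(row ω B a) < #(row ω B a')) < #(A.filter fun a' => ω a' b) := by
  -- the rows longer than `row ω B a` are exactly the rows strictly containing it
  have hrow : ∀ a', b ∈ row ω B a' ↔ ω a' b = true := by simp [row, hb]
  constructor
  · intro hab
    refine card_lt_card ⟨fun a' ha' => ?_, fun hsub => ?_⟩
    · simp only [mem_filter] at ha' ⊢
      exact ⟨ha'.1, (hrow a').mp (hω.row_subset_of_card_le ha ha'.1 ha'.2.le ((hrow a).mpr hab))⟩
    · simpa using hsub (mem_filter.mpr ⟨ha, hab⟩)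
  · intro hlt
    by_contra hab
    refine (card_le_card fun a' ha' => ?_).not_gt hlt
    simp only [mem_filter] at ha' ⊢
    refine ⟨ha'.1, lt_of_not_ge fun hle => hab ?_⟩
    exact (hrow a).mp (hω.row_subset_of_card_le ha'.1 ha hle ((hrow a').mpr ha'.2))

lemma RowChain.eqOn (hω : RowChain ω A B) (hω' : RowChain ω' A B)
    (hrow : ∀ a ∈ A, #(row ω B a) = #(row ω' B a))
    (hcol : ∀ b ∈ B, #(A.filter fun a => ω a b) = #(A.filter fun a => ω' a b))
    {a : α} {b : β} (ha : a ∈ A) (hb : b ∈ B) : ω a b = ω' a b := by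
  have hsame : A.filter (fun a' => #(row ω B a) < #(row ω B a')) =
      A.filter (fun a' => #(row ω' B a) < #(row ω' B a')) :=
    filter_congr fun a' ha' => by rw [hrow a ha, hrow a' ha']
  rw [Bool.eq_iff_iff, hω.apply_eq_true_iff ha hb, hω'.apply_eq_true_iff ha hb, hsame, hcol b hb]

lemma card_rowChain_le [Fintype α] [Fintype β] (A : Finset α) (B : Finset β) :
    Nat.card {ω : α → β → Bool // RowChain ω A B} ≤
      (#B + 1) ^ #A * (#A + 1) ^ #B * 2 ^ (Fintype.card α * Fintype.card β - #A * #B) := by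
  classical
  let outside := {p : α × β // p ∉ A ×ˢ B}
  have houtside : Fintype.card outside = Fintype.card α * Fintype.card β - #A * #B := by
    rw [Fintype.card_subtype_compl, Fintype.card_prod, Fintype.card_coe, card_product]
  -- a chain is determined by its row sums, its column sums and the entries outside `A × B`
  let code (ω : {ω : α → β → Bool // RowChain ω A B}) :
      (A → Fin (#B + 1)) × (B → Fin (#A + 1)) × (outside → Bool) :=
    (fun a => ⟨#(row ω.1 B a), Nat.lt_succ_of_le (card_filter_le _ _)⟩,
      fun b => ⟨#(A.filter fun a => ω.1 a b), Nat.lt_succ_of_le (card_filter_le _ _)⟩,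
      fun p => ω.1 p.1.1 p.1.2)
  have hcode : Function.Injective code := by
    rintro ⟨ω, hω⟩ ⟨ω', hω'⟩ heq
    simp only [code, Prod.mk.injEq, funext_iff, Fin.ext_iff] at heq
    obtain ⟨hrow, hcol, hout⟩ := heq
    ext a b : 3
    by_cases hab : a ∈ A ∧ b ∈ B
    · exact hω.eqOn hω' (fun a ha => hrow ⟨a, ha⟩) (fun b hb => hcol ⟨b, hb⟩) hab.1 hab.2
    · exact hout ⟨(a, b), by simpa using hab⟩
  simpa [houtside, mul_assoc] using Nat.card_le_card_of_injective code hcode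

lemma card_exists_rowChain_le [Fintype α] [Fintype β] (s t : ℕ) :
    Nat.card {ω : α → β → Bool // ∃ A B, #A = s ∧ #B = t ∧ RowChain ω A B} ≤
      (Fintype.card α).choose s * (Fintype.card β).choose t *
        ((t + 1) ^ s * (s + 1) ^ t * 2 ^ (Fintype.card α * Fintype.card β - s * t)) := by
  let pairs := powersetCard s (univ : Finset α) ×ˢ powersetCard t (univ : Finset β)
  calc Nat.card {ω : α → β → Bool // ∃ A B, #A = s ∧ #B = t ∧ RowChain ω A B}
      = Nat.card {ω : α → β → Bool // ∃ AB ∈ pairs, RowChain ω AB.1 AB.2} :=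
        Nat.card_congr <| Equiv.subtypeEquivRight fun ω => by simp [pairs, and_assoc]
    _ ≤ ∑ AB ∈ pairs, Nat.card {ω : α → β → Bool // RowChain ω AB.1 AB.2} :=
        Nat.card_subtype_exists_le_sum pairs _
    _ ≤ ∑ _AB ∈ pairs,
          (t + 1) ^ s * (s + 1) ^ t * 2 ^ (Fintype.card α * Fintype.card β - s * t) := by
        refine sum_le_sum fun AB hAB => ?_
        simp only [pairs, mem_product, mem_powersetCard] at hAB
        simpa [hAB.1.2, hAB.2.2] using card_rowChain_le AB.1 AB.2
    _ = _ := by simp [pairs]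

end RowChain

lemma succ_pow_five_le_two_pow {s : ℕ} (hs : 2 ≤ s) : (s + 1) ^ 5 ≤ 2 ^ (4 * s) := by
  induction s, hs using Nat.le_induction with
  | base => norm_num
  | succ s hs ih =>
    have h : (3 * (s + 2)) ^ 5 ≤ (4 * (s + 1)) ^ 5 := Nat.pow_le_pow_left (by omega) 5
    rw [mul_pow, mul_pow] at h
    rw [show s + 1 + 1 = s + 2 by ring, show 4 * (s + 1) = 4 * s + 4 by ring, pow_add]
    norm_num at h ⊢
    omega

lemma eventually_succ_pow_le_two_pow (k : ℕ) : ∀ᶠ n : ℕ in atTop, (n + 1) ^ k ≤ 2 ^ n := by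
  have h := (tendsto_pow_const_div_const_pow_of_one_lt k one_lt_two).comp (tendsto_add_atTop_nat 1)
  filter_upwards [h.eventually (ge_mem_nhds (by norm_num : (0 : ℝ) < 1 / 2))] with n hn
  simp only [Function.comp, Nat.cast_add, Nat.cast_one, pow_succ] at hn
  rw [div_le_iff₀ (by positivity)] at hn
  exact_mod_cast (by linarith : ((n : ℝ) + 1) ^ k ≤ 2 ^ n)

-- choices of `A`, `B`, the row sums and the column sums of a chain on `A × B`
def chainWeight (n s t : ℕ) : ℕ :=
  n.choose s * n.choose t * ((t + 1) ^ s * (s + 1) ^ t)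

lemma chainWeight_comm (n s t : ℕ) : chainWeight n s t = chainWeight n t s := by
  unfold chainWeight; ring

lemma chainWeight_le {n s t : ℕ} (hs : 2 ≤ s) (hsum : s + t = n + 2) :
    chainWeight n s t ≤ (n + 1) ^ (3 * s) * (s + 1) ^ t := by
  have hchoose : n.choose t ≤ (n + 1) ^ s := by
    rw [← Nat.choose_symm (by omega), show n - t = s - 2 by omega]
    exact (Nat.choose_le_pow n _).trans
      ((Nat.pow_le_pow_left n.le_succ _).trans (Nat.pow_le_pow_right n.succ_pos (by omega)))
  calc chainWeight n s t ≤ (n + 1) ^ s * (n + 1) ^ s * ((n + 1) ^ s * (s + 1) ^ t) := by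
        unfold chainWeight
        gcongr
        · exact (Nat.choose_le_pow n s).trans (Nat.pow_le_pow_left n.le_succ s)
        · omega
    _ = (n + 1) ^ (3 * s) * (s + 1) ^ t := by ring

lemma chainWeight_pow_five_mul_le {n s t : ℕ} (hn : (n + 1) ^ 120 ≤ 2 ^ n) (hs : 2 ≤ s)
    (hst : s ≤ t) (hsum : s + t = n + 2) :
    chainWeight n s t ^ 5 * 2 ^ n ≤ (2 ^ (s * t)) ^ 5 := by
  -- the polynomial factor is absorbed by one fifth of `2 ^ (s * t)` ...
  have hpoly : (n + 1) ^ (15 * s) * 2 ^ n ≤ 2 ^ (s * t) := by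
    have hexp : n * s + 8 * n ≤ 8 * (s * t) := by nlinarith
    refine (Nat.pow_le_pow_iff_left (by norm_num : 8 ≠ 0)).mp ?_
    calc ((n + 1) ^ (15 * s) * 2 ^ n) ^ 8 = ((n + 1) ^ 120) ^ s * 2 ^ (8 * n) := by
          rw [mul_pow, ← pow_mul, ← pow_mul, ← pow_mul]; ring
      _ ≤ (2 ^ n) ^ s * 2 ^ (8 * n) := by gcongr
      _ = 2 ^ (n * s + 8 * n) := by ring
      _ ≤ 2 ^ (8 * (s * t)) := Nat.pow_le_pow_right (by norm_num) hexp
      _ = (2 ^ (s * t)) ^ 8 := by ring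
  -- ... and `(s + 1) ^ t` by the remaining four fifths
  have hrow : (s + 1) ^ (5 * t) ≤ 2 ^ (4 * (s * t)) := by
    calc (s + 1) ^ (5 * t) = ((s + 1) ^ 5) ^ t := by rw [← pow_mul]
      _ ≤ (2 ^ (4 * s)) ^ t := Nat.pow_le_pow_left (succ_pow_five_le_two_pow hs) t
      _ = 2 ^ (4 * (s * t)) := by ring
  calc chainWeight n s t ^ 5 * 2 ^ n ≤ ((n + 1) ^ (3 * s) * (s + 1) ^ t) ^ 5 * 2 ^ n :=
        Nat.mul_le_mul_right _ (Nat.pow_le_pow_left (chainWeight_le hs hsum) 5)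
    _ = (n + 1) ^ (15 * s) * 2 ^ n * (s + 1) ^ (5 * t) := by ring
    _ ≤ 2 ^ (s * t) * 2 ^ (4 * (s * t)) := by gcongr
    _ = (2 ^ (s * t)) ^ 5 := by ring

lemma chainWeight_mul_le {r : ℝ} (hr₀ : 0 ≤ r) (hr : r ^ 5 = 2) {n s t : ℕ}
    (hn : (n + 1) ^ 120 ≤ 2 ^ n) (hsum : s + t = n + 2) :
    (chainWeight n s t : ℝ) * 2 ^ (n * n - s * t) * r ^ n ≤ 2 ^ (n * n) := by
  wlog hst : s ≤ t generalizing s t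
  · simpa [chainWeight_comm n s t, mul_comm s t] using this (by omega) (by omega)
  rcases lt_or_ge s 2 with hs | hs
  · have hzero : chainWeight n s t = 0 := by
      simp [chainWeight, Nat.choose_eq_zero_of_lt (show n < t by omega)]
    simp [hzero]
  have hW : (chainWeight n s t : ℝ) * r ^ n ≤ 2 ^ (s * t) := by
    refine (pow_le_pow_iff_left₀ (by positivity) (by positivity) (by norm_num : 5 ≠ 0)).mp ?_
    rw [mul_pow, ← pow_mul, mul_comm n, pow_mul, hr]
    exact_mod_cast chainWeight_pow_five_mul_le hn hs hst hsum
  calc (chainWeight n s t : ℝ) * 2 ^ (n * n - s * t) * r ^ n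
      = (chainWeight n s t : ℝ) * r ^ n * 2 ^ (n * n - s * t) := by ring
    _ ≤ 2 ^ (s * t) * 2 ^ (n * n - s * t) := by gcongr
    _ = 2 ^ (n * n) := by
      rw [← pow_add, Nat.add_sub_cancel' (Nat.mul_le_mul (by omega) (by omega))]

section BipartiteTournament
variable {n : ℕ}

def HasLargeRowChain (ω : Fin n → Fin n → Bool) : Prop :=
  ∃ A B : Finset (Fin n), #A + #B = n + 2 ∧ RowChain ω A B

lemma IsFAS.rowChain {ω : Fin n → Fin n → Bool} {F : Fin n ⊕ Fin n → Fin n ⊕ Fin n → Prop}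
    (hF : IsFAS (bipEdge ω) F) {S B : Finset (Fin n)}
    (hSB : ∀ a ∈ S, ∀ b ∈ B, ¬ (F (.inl a) (.inr b) ∨ F (.inr b) (.inl a))) :
    RowChain ω S B := by
  intro a₁ h₁ a₂ h₂
  by_contra! h
  obtain ⟨b₁, hb₁, hb₁'⟩ := not_subset.mp h.1
  obtain ⟨b₂, hb₂, hb₂'⟩ := not_subset.mp h.2
  simp only [row, mem_filter, not_and, Bool.not_eq_true] at hb₁ hb₂ hb₁' hb₂'
  -- otherwise `a₁ → b₁ → a₂ → b₂ → a₁` is a cycle avoiding `F`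
  let G : Fin n ⊕ Fin n → Fin n ⊕ Fin n → Prop := fun u v => bipEdge ω u v ∧ ¬ F u v
  have e₁ : G (.inl a₁) (.inr b₁) := ⟨hb₁.2, fun hf => hSB a₁ h₁ b₁ hb₁.1 (.inl hf)⟩
  have e₂ : G (.inr b₁) (.inl a₂) := ⟨hb₁' hb₁.1, fun hf => hSB a₂ h₂ b₁ hb₁.1 (.inr hf)⟩
  have e₃ : G (.inl a₂) (.inr b₂) := ⟨hb₂.2, fun hf => hSB a₂ h₂ b₂ hb₂.1 (.inl hf)⟩
  have e₄ : G (.inr b₂) (.inl a₁) := ⟨hb₂' hb₂.1, fun hf => hSB a₁ h₁ b₂ hb₂.1 (.inr hf)⟩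
  exact hF.2 _ (.tail (.tail (.tail (.single e₁) e₂) e₃) e₄)

lemma IsFAS.exists_matching {ω : Fin n → Fin n → Bool}
    {F : Fin n ⊕ Fin n → Fin n ⊕ Fin n → Prop} (hF : IsFAS (bipEdge ω) F)
    (hω : ¬ HasLargeRowChain ω) :
    ∃ M : Finset (Fin n × Fin n), #M = n - 1 ∧
      (∀ p ∈ M, F (.inl p.1) (.inr p.2) ∨ F (.inr p.2) (.inl p.1)) ∧
      ∀ p ∈ M, ∀ q ∈ M, p ≠ q → p.1 ≠ q.1 ∧ p.2 ≠ q.2 := by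
  classical
  let N (a : Fin n) : Finset (Fin n) :=
    univ.filter fun b => F (.inl a) (.inr b) ∨ F (.inr b) (.inl a)
  -- a set `S` with `#N(S) ≤ #S - 2` leaves room for `n + 2 - #S` columns with no `F`-edge to `S`
  have hdeficiency : ∀ S : Finset (Fin n), #S ≤ #(S.biUnion N) + 1 := by
    intro S
    by_contra! hS
    have hroom : n + 2 - #S ≤ #(univ \ S.biUnion N) := by
      rw [card_sdiff_of_subset (subset_univ _), card_univ, Fintype.card_fin]
      omega
    obtain ⟨B, hB, hBcard⟩ := exists_subset_card_eq hroom
    refine hω ⟨S, B, by have := card_le_univ S; simp at this; omega, hF.rowChain ?_⟩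
    intro a ha b hb hab
    exact (mem_sdiff.mp (hB hb)).2 (mem_biUnion.mpr ⟨a, ha, by simpa [N] using hab⟩)
  simpa [N] using exists_matching_of_card_le_card_biUnion_add N 1 hdeficiency

lemma card_hasLargeRowChain_mul_le {r : ℝ} (hr₀ : 0 ≤ r) (hr : r ^ 5 = 2)
    (hn : (n + 1) ^ 120 ≤ 2 ^ n) :
    (Nat.card {ω : Fin n → Fin n → Bool // HasLargeRowChain ω} : ℝ) * r ^ n ≤
      (n + 3) * 2 ^ (n * n) := by
  have hcount : Nat.card {ω : Fin n → Fin n → Bool // HasLargeRowChain ω} ≤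
      ∑ s ∈ range (n + 3), chainWeight n s (n + 2 - s) * 2 ^ (n * n - s * (n + 2 - s)) :=
    calc Nat.card {ω : Fin n → Fin n → Bool // HasLargeRowChain ω}
        ≤ Nat.card {ω : Fin n → Fin n → Bool //
            ∃ s ∈ range (n + 3), ∃ A B, #A = s ∧ #B = n + 2 - s ∧ RowChain ω A B} :=
          Nat.card_subtype_le_of_imp fun ω ⟨A, B, hAB, hω⟩ =>
            ⟨#A, mem_range.mpr (by omega), A, B, rfl, by omega, hω⟩
      _ ≤ _ := (Nat.card_subtype_exists_le_sum _ _).trans <| sum_le_sum fun s _ => by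
          simpa [chainWeight, mul_assoc] using
            card_exists_rowChain_le (α := Fin n) (β := Fin n) s (n + 2 - s)
  calc (Nat.card {ω : Fin n → Fin n → Bool // HasLargeRowChain ω} : ℝ) * r ^ n
      ≤ ∑ s ∈ range (n + 3),
          (chainWeight n s (n + 2 - s) : ℝ) * 2 ^ (n * n - s * (n + 2 - s)) * r ^ n := by
        rw [← sum_mul]
        gcongr
        exact_mod_cast hcount
    _ ≤ ∑ _s ∈ range (n + 3), (2 : ℝ) ^ (n * n) :=
        sum_le_sum fun s hs => chainWeight_mul_le hr₀ hr hn (by simp at hs; omega)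
    _ = (n + 3) * 2 ^ (n * n) := by simp

end BipartiteTournament

/-- Asymptotically almost surely, a random orientation of `K_{n,n}` has the property that
every minimal feedback arc set of it contains a matching of size `n − 1` (a set of
`n − 1` pairwise vertex-disjoint edges). -/
theorem aas_every_min_fas_has_large_matching :
    ∀ ε : ℝ, 0 < ε → ∃ N : ℕ, ∀ n ≥ N,
      (Nat.card {ω : Fin n → Fin n → Bool //
          ¬ ∀ F : (Fin n ⊕ Fin n) → (Fin n ⊕ Fin n) → Prop,
            IsMinFAS (bipEdge ω) F →
              ∃ M : Finset (Fin n × Fin n), M.card = n - 1 ∧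
                (∀ p ∈ M, F (Sum.inl p.1) (Sum.inr p.2) ∨ F (Sum.inr p.2) (Sum.inl p.1)) ∧
                (∀ p ∈ M, ∀ q ∈ M, p ≠ q → p.1 ≠ q.1 ∧ p.2 ≠ q.2)} : ℝ)
        ≤ ε * 2 ^ (n * n) := by
  intro ε hε
  set r : ℝ := 2 ^ (5⁻¹ : ℝ)
  have hr₀ : 0 ≤ r := by positivity
  have hr : r ^ 5 = 2 := Real.rpow_inv_natCast_pow (by norm_num) (by norm_num)
  have hr₁ : 1 < r := Real.one_lt_rpow (by norm_num) (by norm_num)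
  have hdecay : Tendsto (fun n : ℕ => ((n : ℝ) + 3) / r ^ n) atTop (𝓝 0) := by
    simpa [add_div] using (tendsto_pow_const_div_const_pow_of_one_lt 1 hr₁).add
      ((tendsto_pow_atTop_atTop_of_one_lt hr₁).const_div_atTop 3)
  obtain ⟨N, hN⟩ := eventually_atTop.mp
    ((hdecay.eventually (ge_mem_nhds hε)).and (eventually_succ_pow_le_two_pow 120))
  refine ⟨N, fun n hn => ?_⟩
  obtain ⟨hsmall, hpoly⟩ := hN n hn
  have hrn : 0 < r ^ n := by positivity
  calc _ ≤ (Nat.card {ω : Fin n → Fin n → Bool // HasLargeRowChain ω} : ℝ) := by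
        refine Nat.cast_le.mpr (Nat.card_subtype_le_of_imp fun ω hω => ?_)
        exact by_contra fun h => hω fun F hF => hF.1.exists_matching h
    _ ≤ (n + 3) * 2 ^ (n * n) / r ^ n :=
        (le_div_iff₀ hrn).mpr (card_hasLargeRowChain_mul_le hr₀ hr hpoly)
    _ = (n + 3) / r ^ n * 2 ^ (n * n) := by ring
    _ ≤ ε * 2 ^ (n * n) := by gcongr
end

section
/- Let H be a balanced bipartite graph with parts of size N, minimum degree at least δN with 0 < δ < 1/2, and suppose there exists ε with 0 < ε ≤ δ such that for all subsets R of one part and S of the other part with |R| ≥ εN and |S| ≥ εN, there are at least one edge of H between R and S. Then H has a perfect matching. -/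
/-!
Hall's condition `|R| ≤ |N(R)|` is checked in two regimes. If `|R| ≤ δN`, the neighbourhood of
any single vertex of `R` is already large enough. If `|R| > δN ≥ εN`, the expansion property
forces the set `T` of vertices with no neighbour in `R` to have `|T| < εN ≤ δN`; either `T` is
empty and `N(R)` is the whole other side, or a vertex of `T` has at least `δN` neighbours, all
outside `R`, so that `|R| ≤ N - δN < N - |T| = |N(R)|`.
-/

open Finset

section Hall

variable {α β : Type*} {r : α → β → Prop} [DecidableRel r]

variable (r) in
def HallCondition [Fintype β] : Prop :=
  ∀ A : Finset α, #A ≤ #{b | ∃ a ∈ A, r a b}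

theorem card_filter_rel_le_card_filter_exists_rel [Fintype β] {A : Finset α} {a : α}
    (ha : a ∈ A) : #{b | r a b} ≤ #{b | ∃ a ∈ A, r a b} :=
  card_le_card fun _ hb => by simp only [mem_filter_univ] at hb ⊢; exact ⟨a, ha, hb⟩

theorem card_filter_rel_add_card_le_of_forall_not_rel [Fintype α] {A : Finset α} {b : β}
    (hb : ∀ a ∈ A, ¬ r a b) : #{a | r a b} + #A ≤ Fintype.card α := by
  classical
  have hdisj : Disjoint ({a | r a b} : Finset α) A :=
    disjoint_left.2 fun a ha haA => hb a haA (by simpa only [mem_filter_univ] using ha)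
  rw [← card_union_of_disjoint hdisj]
  exact card_le_univ _

theorem card_filter_not_exists_rel_lt [Fintype β] {k : ℝ}
    (hexp : ∀ (R : Finset α) (S : Finset β), k ≤ #R → k ≤ #S → ∃ a ∈ R, ∃ b ∈ S, r a b)
    {A : Finset α} (hA : k ≤ #A) : (#{b | ¬ ∃ a ∈ A, r a b} : ℝ) < k := by
  by_contra hT
  obtain ⟨a, ha, b, hb, hab⟩ := hexp A _ hA (not_lt.1 hT)
  simp only [mem_filter_univ] at hb
  exact hb ⟨a, ha, hab⟩

variable [Fintype α] [Fintype β]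

theorem HallCondition.of_minDegree_of_expansion (hcard : Fintype.card α = Fintype.card β)
    {m k : ℝ} (hkm : k ≤ m) (hdegA : ∀ a, m ≤ #{b | r a b}) (hdegB : ∀ b, m ≤ #{a | r a b})
    (hexp : ∀ (R : Finset α) (S : Finset β), k ≤ #R → k ≤ #S → ∃ a ∈ R, ∃ b ∈ S, r a b) :
    HallCondition r := by
  intro A
  obtain rfl | ⟨a₀, ha₀⟩ := A.eq_empty_or_nonempty
  · simp
  by_cases hsmall : (#A : ℝ) ≤ m
  · have hdeg : (#{b | r a₀ b} : ℝ) ≤ #{b | ∃ a ∈ A, r a b} := by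
      exact_mod_cast card_filter_rel_le_card_filter_exists_rel (r := r) ha₀
    exact_mod_cast hsmall.trans ((hdegA a₀).trans hdeg)
  push Not at hsmall
  set S : Finset β := {b | ∃ a ∈ A, r a b}
  set T : Finset β := {b | ¬ ∃ a ∈ A, r a b}
  have hT : (#T : ℝ) < k := card_filter_not_exists_rel_lt hexp (hkm.trans hsmall.le)
  have hST : #S + #T = Fintype.card β := card_filter_add_card_filter_not _
  obtain hT0 | ⟨b, hb⟩ := T.eq_empty_or_nonempty
  · have := card_le_univ A
    rw [hT0, card_empty] at hST
    omega
  · have hb' : ∀ a ∈ A, ¬ r a b := by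
      simpa only [T, mem_filter_univ, not_exists, not_and] using hb
    have hsum : #{a | r a b} + #A ≤ #S + #T := by
      rw [hST, ← hcard]
      exact card_filter_rel_add_card_le_of_forall_not_rel hb'
    have hsumℝ : (#{a | r a b} : ℝ) + #A ≤ #S + #T := by exact_mod_cast hsum
    have := hdegB b
    exact_mod_cast (by linarith : (#A : ℝ) ≤ #S)

theorem HallCondition.exists_equiv (hcard : Fintype.card α = Fintype.card β)
    (hall : HallCondition r) : ∃ e : α ≃ β, ∀ a, r a (e a) := by
  obtain ⟨f, hf, hrf⟩ := (Fintype.all_card_le_filter_rel_iff_exists_injective r).1 hall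
  exact ⟨.ofBijective f ((Fintype.bijective_iff_injective_and_card f).2 ⟨hf, hcard⟩), hrf⟩

end Hall

theorem balanced_bipartite_perfect_matching_general {α β : Type*} [Fintype α] [Fintype β]
    (N : ℕ) (hα : Fintype.card α = N) (hβ : Fintype.card β = N)
    (Adj : α → β → Prop) (δ : ℝ)
    (hdegA : ∀ a : α, δ * N ≤ Nat.card {b : β // Adj a b})
    (hdegB : ∀ b : β, δ * N ≤ Nat.card {a : α // Adj a b})
    (hexp : ∃ ε : ℝ, 0 < ε ∧ ε ≤ δ ∧
      ∀ (R : Finset α) (S : Finset β), ε * N ≤ R.card → ε * N ≤ S.card →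
        ∃ a ∈ R, ∃ b ∈ S, Adj a b) :
    ∃ e : α ≃ β, ∀ a : α, Adj a (e a) := by
  classical
  obtain ⟨ε, -, hεδ, hE⟩ := hexp
  simp only [Nat.card_eq_fintype_card, Fintype.card_subtype] at hdegA hdegB
  have hcard : Fintype.card α = Fintype.card β := hα.trans hβ.symm
  exact (HallCondition.of_minDegree_of_expansion hcard
    (mul_le_mul_of_nonneg_right hεδ N.cast_nonneg) hdegA hdegB hE).exists_equiv hcard

/-- Hall-type matching lemma: a balanced bipartite graph with parts of size `N`, minimum
degree at least `δN` (`0 < δ < 1/2`), such that for some `0 < ε ≤ δ` every pair of sets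
`R`, `S` on opposite sides with `|R| ≥ εN` and `|S| ≥ εN` is joined by an edge, has a
perfect matching. -/
theorem balanced_bipartite_perfect_matching {α β : Type*} [Fintype α] [Fintype β]
    (N : ℕ) (hα : Fintype.card α = N) (hβ : Fintype.card β = N)
    (Adj : α → β → Prop) (δ : ℝ) (hδ0 : 0 < δ) (hδ2 : δ < 1 / 2)
    (hdegA : ∀ a : α, δ * N ≤ Nat.card {b : β // Adj a b})
    (hdegB : ∀ b : β, δ * N ≤ Nat.card {a : α // Adj a b})
    (hexp : ∃ ε : ℝ, 0 < ε ∧ ε ≤ δ ∧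
      ∀ (R : Finset α) (S : Finset β), ε * N ≤ R.card → ε * N ≤ S.card →
        ∃ a ∈ R, ∃ b ∈ S, Adj a b) :
    ∃ e : α ≃ β, ∀ a : α, Adj a (e a) :=
  balanced_bipartite_perfect_matching_general N hα hβ Adj δ hdegA hdegB hexp
end

section
/- Let T be a k-partite tournament with parts A_1,…,A_k of size n and let π be a permutation of the vertices. Suppose that for every 1 ≤ s,ℓ ≤ k, every sequence of q ≤ 2 distinct vertices of A_ℓ, and every D ∈ {+,−}^q, the number of vertices of A_s simultaneously D-consistent with the sequence is at most n·2^{−q} + n^{2/3}. If 3n/4 + 3n^{2/3} < 15n/17, then for every 1 ≤ r ≤ k there are at most k − 1 vertices v ∈ A_r failing the property that for every i ≠ r, v has at least n/17 neighbors of A_i in L_π(T). -/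
/-!
Fix a part `A_i`, `i ≠ r`, and two vertices `a, b ∈ A_r` with `π a < π b`. A vertex `w ∈ A_i`
adjacent in `L_π(T)` to neither of them is forced into a sign pattern by the position of `π w`:
`(+,+)` if `π w < π a`, `(−,+)` if `π a < π w < π b`, `(−,−)` if `π b < π w`. By the hypothesis
with `q = 2` each pattern is shared by at most `n/4 + n^{2/3}` vertices, so `a` and `b` together
have at least `n − 3n/4 − 3n^{2/3} > 2n/17` neighbours in `A_i`, and one of them has at least
`n/17`. Hence each part `A_i` witnesses the unfriendliness of at most one vertex of `A_r`, and
there are at most `k − 1` non-friendly vertices.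
-/

open Set

section ForwardGraph

variable {V β : Type*} [LinearOrder β]

/-- The graph `L_π(T)`. -/
def forwardGraph (E : V → V → Prop) (π : V → β) : SimpleGraph V where
  Adj a b := (E a b ∧ π a < π b) ∨ (E b a ∧ π b < π a)
  symm := ⟨fun _ _ => Or.symm⟩
  loopless := ⟨fun a h => by rcases h with ⟨_, h⟩ | ⟨_, h⟩ <;> exact lt_irrefl (π a) h⟩

/-- `w` is `d`-consistent with `v`, with `true` standing for `+`. -/
def IsConsistent (E : V → V → Prop) (d : Bool) (v w : V) : Prop := if d then E v w else E w v

variable {E : V → V → Prop} {π : V → β}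

theorem isConsistent_of_not_forwardGraph_adj {a b w : V} (hab : π a < π b)
    (hwa : π w ≠ π a) (hwb : π w ≠ π b) (hEa : E a w ∨ E w a) (hEb : E b w ∨ E w b)
    (ha : ¬ (forwardGraph E π).Adj a w) (hb : ¬ (forwardGraph E π).Adj b w) :
    (IsConsistent E true a w ∧ IsConsistent E true b w) ∨
      (IsConsistent E false a w ∧ IsConsistent E true b w) ∨
      (IsConsistent E false a w ∧ IsConsistent E false b w) := by
  simp only [forwardGraph, IsConsistent, if_true, Bool.false_eq_true, if_false] at *
  rcases hwa.lt_or_gt with hwa | hwa <;> rcases hwb.lt_or_gt with hwb | hwb <;>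
    first | exact absurd (hab.trans hwb) hwa.not_gt | tauto

theorem card_le_card_forwardGraph_adj_add {W : Type*} [Finite W] (x : W → V) {a b : V} {B : ℝ}
    (hab : π a < π b) (hπa : ∀ w, π (x w) ≠ π a) (hπb : ∀ w, π (x w) ≠ π b)
    (hEa : ∀ w, E a (x w) ∨ E (x w) a) (hEb : ∀ w, E b (x w) ∨ E (x w) b)
    (hcons : ∀ d₁ d₂ : Bool,
      (Nat.card {w // IsConsistent E d₁ a (x w) ∧ IsConsistent E d₂ b (x w)} : ℝ) ≤ B) :
    (Nat.card W : ℝ) ≤ Nat.card {w // (forwardGraph E π).Adj a (x w)} +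
      Nat.card {w // (forwardGraph E π).Adj b (x w)} + 3 * B := by
  let S (d₁ d₂ : Bool) : Set W := {w | IsConsistent E d₁ a (x w) ∧ IsConsistent E d₂ b (x w)}
  have hcover : (univ : Set W) ⊆ {w | (forwardGraph E π).Adj a (x w)} ∪
      {w | (forwardGraph E π).Adj b (x w)} ∪ S true true ∪ S false true ∪ S false false := by
    intro w _
    by_cases ha : (forwardGraph E π).Adj a (x w)
    · simp [ha]
    by_cases hb : (forwardGraph E π).Adj b (x w)
    · simp [hb]
    rcases isConsistent_of_not_forwardGraph_adj hab (hπa w) (hπb w) (hEa w) (hEb w) ha hb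
      with h | h | h <;> simp [S, h]
  have hunion : Nat.card W ≤ ncard {w | (forwardGraph E π).Adj a (x w)} +
      ncard {w | (forwardGraph E π).Adj b (x w)} + ncard (S true true) +
      ncard (S false true) + ncard (S false false) := by
    rw [← ncard_univ]
    refine (ncard_le_ncard hcover).trans ?_
    refine (ncard_union_le _ _).trans ?_; gcongr
    refine (ncard_union_le _ _).trans ?_; gcongr
    refine (ncard_union_le _ _).trans ?_; gcongr
    exact ncard_union_le _ _
  simp only [← Nat.card_coe_set_eq] at hunion
  have htt : (Nat.card (S true true) : ℝ) ≤ B := hcons true true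
  have hft : (Nat.card (S false true) : ℝ) ≤ B := hcons false true
  have hff : (Nat.card (S false false) : ℝ) ≤ B := hcons false false
  change (Nat.card W : ℝ) ≤ Nat.card {w | (forwardGraph E π).Adj a (x w)} +
    Nat.card {w | (forwardGraph E π).Adj b (x w)} + 3 * B
  have := (Nat.cast_le (α := ℝ)).2 hunion
  push_cast at this
  linarith

theorem le_card_forwardGraph_adj_of_card_lt {W : Type*} [Finite W] (x : W → V) {a b : V}
    {t B : ℝ} (hab : π a ≠ π b) (hπa : ∀ w, π (x w) ≠ π a) (hπb : ∀ w, π (x w) ≠ π b)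
    (hEa : ∀ w, E a (x w) ∨ E (x w) a) (hEb : ∀ w, E b (x w) ∨ E (x w) b)
    (hcons : ∀ d₁ d₂ : Bool,
      (Nat.card {w // IsConsistent E d₁ a (x w) ∧ IsConsistent E d₂ b (x w)} : ℝ) ≤ B)
    (hB : 2 * t + 3 * B ≤ Nat.card W)
    (ha : (Nat.card {w // (forwardGraph E π).Adj a (x w)} : ℝ) < t) :
    t ≤ Nat.card {w // (forwardGraph E π).Adj b (x w)} := by
  rcases hab.lt_or_gt with hab | hab
  · linarith [card_le_card_forwardGraph_adj_add x hab hπa hπb hEa hEb hcons]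
  · have hcons' (d₁ d₂ : Bool) :
        (Nat.card {w // IsConsistent E d₁ b (x w) ∧ IsConsistent E d₂ a (x w)} : ℝ) ≤ B := by
      simpa only [and_comm] using hcons d₂ d₁
    linarith [card_le_card_forwardGraph_adj_add x hab hπb hπa hEb hEa hcons']

theorem eq_of_card_forwardGraph_adj_lt {k n : ℕ} {E : Fin k × Fin n → Fin k × Fin n → Prop}
    {π : Fin k × Fin n → β} (htot : ∀ u v : Fin k × Fin n, u.1 ≠ v.1 → E u v ∨ E v u)
    (hπ : Function.Injective π) {r i : Fin k} (hir : i ≠ r) {t B : ℝ}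
    (hcons : ∀ v v' : Fin n, v ≠ v' → ∀ d₁ d₂ : Bool,
      (Nat.card {w // IsConsistent E d₁ (r, v) (i, w) ∧ IsConsistent E d₂ (r, v') (i, w)} : ℝ)
        ≤ B)
    (hB : 2 * t + 3 * B ≤ n) {v v' : Fin n}
    (hv : (Nat.card {w // (forwardGraph E π).Adj (r, v) (i, w)} : ℝ) < t)
    (hv' : (Nat.card {w // (forwardGraph E π).Adj (r, v') (i, w)} : ℝ) < t) :
    v = v' := by
  by_contra hne
  have hπi (u w : Fin n) : π (i, w) ≠ π (r, u) := hπ.ne fun h => hir (congrArg Prod.fst h)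
  refine (le_card_forwardGraph_adj_of_card_lt (fun w => (i, w)) (hπ.ne (by simpa using hne))
    (hπi v) (hπi v') (fun _ => htot _ _ hir.symm) (fun _ => htot _ _ hir.symm)
    (hcons v v' hne) (by rwa [Nat.card_fin]) hv).not_gt hv'

end ForwardGraph

theorem Nat.card_subtype_le_of_unique_witness {α ι : Type*} [Finite ι] {p : α → Prop}
    {P : α → ι → Prop} (hp : ∀ a, p a → ∃ i, P a i) (hP : ∀ i a b, P a i → P b i → a = b) :
    Nat.card {a // p a} ≤ Nat.card ι := by
  choose f hf using fun a : {a // p a} => hp a a.2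
  exact Nat.card_le_card_of_injective f fun a b hab =>
    Subtype.ext (hP _ _ _ (hf a) (hab ▸ hf b))

theorem at_most_k_minus_one_unfriendly_vertices_general (k n : ℕ)
    (E : (Fin k × Fin n) → (Fin k × Fin n) → Prop)
    (hcross : ∀ u v : Fin k × Fin n, u.1 ≠ v.1 → (E u v ↔ ¬ E v u))
    (π : Fin k × Fin n → ℕ) (hπ : Function.Injective π)
    (hcons : ∀ s ℓ : Fin k, ∀ q : ℕ, q ≤ 2 → ∀ vs : Fin q → Fin n,
      Function.Injective vs → ∀ D : Fin q → Bool,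
      (Nat.card {w : Fin n // ∀ j : Fin q,
          if D j then E (ℓ, vs j) (s, w) else E (s, w) (ℓ, vs j)} : ℝ)
        ≤ (n : ℝ) / 2 ^ q + (n : ℝ) ^ ((2 : ℝ) / 3))
    (hn : 3 * (n : ℝ) / 4 + 3 * (n : ℝ) ^ ((2 : ℝ) / 3) < 15 * (n : ℝ) / 17) :
    ∀ r : Fin k,
      Nat.card {v : Fin n // ¬ ∀ i : Fin k, i ≠ r →
        (n : ℝ) / 17 ≤ Nat.card {w : Fin n //
          (E (r, v) (i, w) ∧ π (r, v) < π (i, w)) ∨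
            (E (i, w) (r, v) ∧ π (i, w) < π (r, v))}} ≤ k - 1 := by
  intro r
  have htot (u v : Fin k × Fin n) (h : u.1 ≠ v.1) : E u v ∨ E v u :=
    (em (E v u)).symm.imp_left (hcross u v h).2
  have hpair (i : Fin k) (v v' : Fin n) (hne : v ≠ v') (d₁ d₂ : Bool) :
      (Nat.card {w // IsConsistent E d₁ (r, v) (i, w) ∧ IsConsistent E d₂ (r, v') (i, w)} : ℝ)
        ≤ n / 4 + n ^ ((2 : ℝ) / 3) := by
    have h := hcons i r 2 le_rfl ![v, v'] (injective_pair_iff_ne.2 hne) ![d₁, d₂]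
    norm_num only [Fin.forall_fin_two, Matrix.cons_val_zero, Matrix.cons_val_one] at h
    exact h
  calc _ ≤ Nat.card {i : Fin k // i ≠ r} := by
        refine Nat.card_subtype_le_of_unique_witness (fun v hv => ?_) fun i v v' =>
          eq_of_card_forwardGraph_adj_lt (t := n / 17) htot hπ i.2 (hpair i) (by linarith)
        push Not at hv
        obtain ⟨i, hir, hi⟩ := hv
        exact ⟨⟨i, hir⟩, hi⟩
    _ = k - 1 := by simp

/-- Let `T = (E)` be a `k`-partite tournament with parts `A_i = {i} × Fin n` and `π` an
injective vertex labelling.  Suppose that for all parts `s, ℓ`, every sequence of `q ≤ 2`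
distinct vertices of `A_ℓ` and every sign pattern `D`, the number of vertices of `A_s`
`D`-consistent with the sequence is at most `n·2^{−q} + n^{2/3}`, and that
`3n/4 + 3n^{2/3} < 15n/17`.  Then for every `r` at most `k − 1` vertices `v` of `A_r`
fail to have, for every `i ≠ r`, at least `n/17` neighbors of `A_i` in `L_π(T)`. -/
theorem at_most_k_minus_one_unfriendly_vertices (k n : ℕ)
    (E : (Fin k × Fin n) → (Fin k × Fin n) → Prop)
    (hsame : ∀ u v : Fin k × Fin n, u.1 = v.1 → ¬ E u v)
    (hcross : ∀ u v : Fin k × Fin n, u.1 ≠ v.1 → (E u v ↔ ¬ E v u))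
    (π : Fin k × Fin n → ℕ) (hπ : Function.Injective π)
    (hcons : ∀ s ℓ : Fin k, ∀ q : ℕ, q ≤ 2 → ∀ vs : Fin q → Fin n,
      Function.Injective vs → ∀ D : Fin q → Bool,
      (Nat.card {w : Fin n // ∀ j : Fin q,
          if D j then E (ℓ, vs j) (s, w) else E (s, w) (ℓ, vs j)} : ℝ)
        ≤ (n : ℝ) / 2 ^ q + (n : ℝ) ^ ((2 : ℝ) / 3))
    (hn : 3 * (n : ℝ) / 4 + 3 * (n : ℝ) ^ ((2 : ℝ) / 3) < 15 * (n : ℝ) / 17) :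
    ∀ r : Fin k,
      Nat.card {v : Fin n // ¬ ∀ i : Fin k, i ≠ r →
        (n : ℝ) / 17 ≤ Nat.card {w : Fin n //
          (E (r, v) (i, w) ∧ π (r, v) < π (i, w)) ∨
            (E (i, w) (r, v) ∧ π (i, w) < π (r, v))}} ≤ k - 1 :=
  at_most_k_minus_one_unfriendly_vertices_general k n E hcross π hπ hcons hn
end
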